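/- Suppose 𝒮 is a finite nonempty set (with the discrete σ-algebra) and F : 𝒳 × 𝒮 → 𝒮 is measurable. Then the pair process is stochastically stable: there exists a Borel probability measure v on 𝒳^ℤ × 𝒮 whose first marginal equals μ and which is invariant under the skew-product map Φ. -/

import Mathlib

/-!
Start the chain at a fixed state `s₀`, push `μ ⊗ δ_{s₀}` forward along `Φ`, and average
(Krylov–Bogolyubov). Every iterate has first marginal `μ`, so since `𝒮` is finite all of
them are dominated by the finite measure `μ ⊗ (counting measure on 𝒮)`. Under such a uniform
domination a setwise limit of the Cesàro averages along an ultrafilter is again countably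
additive, so it is a measure; it is `Φ`-invariant because consecutive averages differ by
`O(1/N)`, and it keeps the first marginal `μ`.
-/

open MeasureTheory Filter Function
open scoped ENNReal Topology

/-- The skew-product map `Φ(x, s) = (θx, F(x₀, s))` on `𝒳^ℤ × 𝒮`, where `θ` is the left
shift; iterating it from `(x, s₀)` realizes the recursion `S_{k+1} = F(X_k, S_k)`. -/
def skewProd {𝒳 𝒮 : Type*} (F : 𝒳 × 𝒮 → 𝒮) (p : (ℤ → 𝒳) × 𝒮) : (ℤ → 𝒳) × 𝒮 :=
  (fun n => p.1 (n + 1), F (p.1 0, p.2))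

lemma ENNReal.inv_natCast_mul_sum_const {N : ℕ} (hN : N ≠ 0) (c : ℝ≥0∞) :
    (N : ℝ≥0∞)⁻¹ * ∑ _n ∈ Finset.range N, c = c := by
  rw [Finset.sum_const, Finset.card_range, nsmul_eq_mul, ← mul_assoc,
    ENNReal.inv_mul_cancel (Nat.cast_ne_zero.2 hN) (ENNReal.natCast_ne_top N), one_mul]

namespace MeasureTheory

variable {α β : Type*} [MeasurableSpace α] [MeasurableSpace β]

lemma isSetRing_measurableSet : IsSetRing {s : Set α | MeasurableSet s} :=
  ⟨.empty, fun _ _ => .union, fun _ _ => .diff⟩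

namespace Measure

/-- Domination by `ρ` makes the limiting content continuous at `∅`, hence countably additive. -/
theorem exists_tendsto_apply_of_le {ι : Type*} (U : Ultrafilter ι) (ν : ι → Measure α)
    (ρ : Measure α) [IsFiniteMeasure ρ] (hν : ∀ i, ν i ≤ ρ) :
    ∃ ν' : Measure α, ∀ s, MeasurableSet s → Tendsto (fun i => ν i s) U (𝓝 (ν' s)) := by
  let m : Set α → ℝ≥0∞ := fun s => (U.map fun i => ν i s).lim
  have hm (s : Set α) : Tendsto (fun i => ν i s) U (𝓝 (m s)) := (U.map _).le_nhds_lim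
  have hm_le (s : Set α) : m s ≤ ρ s := le_of_tendsto' (hm s) fun i => Measure.le_iff'.1 (hν i) s
  have hm_ne_top (s : Set α) : m s ≠ ∞ := ne_top_of_le_ne_top (measure_ne_top ρ s) (hm_le s)
  have hm_empty : m ∅ = 0 := tendsto_nhds_unique (hm ∅) (by simp)
  let c : AddContent ℝ≥0∞ {s : Set α | MeasurableSet s} :=
    isSetRing_measurableSet.addContent_of_union m hm_empty fun _ ht hst =>
      tendsto_nhds_unique (hm _) (by simpa only [measure_union hst ht] using (hm _).add (hm _))
  have hc_tendsto ⦃s : ℕ → Set α⦄ (hs : ∀ n, MeasurableSet (s n)) (hanti : Antitone s)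
      (hempty : ⋂ n, s n = ∅) : Tendsto (fun n => c (s n)) atTop (𝓝 0) := by
    have hρ : Tendsto (fun n => ρ (s n)) atTop (𝓝 0) := by
      simpa [hempty, Function.comp_def] using tendsto_measure_iInter_atTop (μ := ρ)
        (fun n => (hs n).nullMeasurableSet) hanti ⟨0, measure_ne_top ρ _⟩
    exact tendsto_of_tendsto_of_tendsto_of_le_of_le tendsto_const_nhds hρ
      (fun _ => zero_le) fun n => hm_le (s n)
  refine ⟨Measure.ofMeasurable (fun s _ => m s) hm_empty fun f hf hdisj =>
    addContent_iUnion_eq_sum_of_tendsto_zero isSetRing_measurableSet c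
      (fun s _ => hm_ne_top s) hc_tendsto hf (MeasurableSet.iUnion hf) hdisj, fun s hs => ?_⟩
  convert hm s using 2
  exact ofMeasurable_apply s hs

lemma le_sum_map_prodMk_of_map_fst_eq {𝒮 : Type*} [MeasurableSpace 𝒮] [Fintype 𝒮]
    {μ : Measure α} {ν : Measure (α × 𝒮)} (hν : ν.map Prod.fst = μ) :
    ν ≤ ∑ s : 𝒮, μ.map (fun x => (x, s)) := by
  refine Measure.le_iff.2 fun E hE => ?_
  have hcover : E ⊆ ⋃ s : 𝒮, Prod.fst ⁻¹' ((fun x => (x, s)) ⁻¹' E) :=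
    fun p hp => Set.mem_iUnion.2 ⟨p.2, hp⟩
  calc ν E ≤ ∑ s : 𝒮, ν (Prod.fst ⁻¹' ((fun x => (x, s)) ⁻¹' E)) :=
        (measure_mono hcover).trans (measure_iUnion_fintype_le _ _)
    _ = ∑ s : 𝒮, μ.map (fun x => (x, s)) E := by
        refine Finset.sum_congr rfl fun s _ => ?_
        rw [← map_apply measurable_fst (measurable_prodMk_right hE), hν,
          map_apply measurable_prodMk_right hE]
    _ = (∑ s : 𝒮, μ.map (fun x => (x, s))) E := (finsetSum_apply _ _ _).symm

lemma map_map_iterate_eq_of_semiconj {π : α → β} {Φ : α → α} {θ : β → β} {μ : Measure β}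
    {ν : Measure α} (hπ : Measurable π) (hΦ : Measurable Φ) (hθ : MeasurePreserving θ μ μ)
    (hsemi : Semiconj π Φ θ) (hν : ν.map π = μ) (n : ℕ) :
    (ν.map Φ^[n]).map π = μ := by
  rw [map_map hπ (hΦ.iterate n), (hsemi.iterate_right n).comp_eq,
    ← map_map (hθ.measurable.iterate n) hπ, hν, (hθ.iterate n).map_eq]

noncomputable def cesaroMap (Φ : α → α) (ν : Measure α) (N : ℕ) : Measure α :=
  (N : ℝ≥0∞)⁻¹ • ∑ n ∈ Finset.range N, ν.map Φ^[n]

variable {Φ : α → α} {ν : Measure α}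

lemma cesaroMap_apply (N : ℕ) (s : Set α) :
    cesaroMap Φ ν N s = (N : ℝ≥0∞)⁻¹ * ∑ n ∈ Finset.range N, ν.map Φ^[n] s := by
  rw [cesaroMap, smul_apply, finsetSum_apply, smul_eq_mul]

lemma cesaroMap_apply_of_forall_eq {N : ℕ} (hN : N ≠ 0) {s : Set α} {c : ℝ≥0∞}
    (h : ∀ n, ν.map Φ^[n] s = c) : cesaroMap Φ ν N s = c := by
  rw [cesaroMap_apply, Finset.sum_congr rfl fun n _ => h n, ENNReal.inv_natCast_mul_sum_const hN]

lemma cesaroMap_le {ρ : Measure α} (hρ : ∀ n, ν.map Φ^[n] ≤ ρ) (N : ℕ) :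
    cesaroMap Φ ν N ≤ ρ := by
  refine Measure.le_iff'.2 fun s => ?_
  rcases eq_or_ne N 0 with rfl | hN
  · simp [cesaroMap_apply]
  calc cesaroMap Φ ν N s ≤ (N : ℝ≥0∞)⁻¹ * ∑ _n ∈ Finset.range N, ρ s := by
        rw [cesaroMap_apply]
        gcongr with n
        exact hρ n
    _ = ρ s := ENNReal.inv_natCast_mul_sum_const hN _

/-- Shifting the sum `∑_{n < N} Φ^[n]_* ν` by one step of `Φ` changes it by at most two
terms, each at most `ν univ`; after dividing by `N` this disappears in the limit. -/
theorem map_eq_of_tendsto_cesaroMap [IsFiniteMeasure ν] (hΦ : Measurable Φ) {U : Filter ℕ}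
    [U.NeBot] (hU : U ≤ atTop) {v : Measure α}
    (hv : ∀ s, MeasurableSet s → Tendsto (fun N => cesaroMap Φ ν N s) U (𝓝 (v s))) :
    v.map Φ = v := by
  have hsmall (f : ℕ → ℝ≥0∞) (hf : ∀ n, f n ≤ ν Set.univ) :
      Tendsto (fun N : ℕ => (N : ℝ≥0∞)⁻¹ * f N) U (𝓝 0) := by
    have hbound : Tendsto (fun N : ℕ => (N : ℝ≥0∞)⁻¹ * ν Set.univ) atTop (𝓝 0) := by
      simpa using ENNReal.Tendsto.mul_const ENNReal.tendsto_inv_nat_nhds_zero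
        (Or.inr (measure_ne_top ν Set.univ))
    exact tendsto_of_tendsto_of_tendsto_of_le_of_le tendsto_const_nhds (hbound.mono_left hU)
      (fun _ => zero_le) fun N => by gcongr; exact hf N
  have hle_univ (n : ℕ) (s : Set α) : ν.map Φ^[n] s ≤ ν Set.univ :=
    (measure_mono (Set.subset_univ s)).trans
      (by rw [map_apply (hΦ.iterate n) .univ, Set.preimage_univ])
  ext s hs
  have hpre (n : ℕ) : ν.map Φ^[n] (Φ ⁻¹' s) = ν.map Φ^[n + 1] s := by
    rw [← map_apply hΦ hs, map_map hΦ (hΦ.iterate n), ← iterate_succ']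
  have htelescope (N : ℕ) :
      cesaroMap Φ ν N (Φ ⁻¹' s) + (N : ℝ≥0∞)⁻¹ * ν.map Φ^[0] s =
        cesaroMap Φ ν N s + (N : ℝ≥0∞)⁻¹ * ν.map Φ^[N] s := by
    simp only [cesaroMap_apply, hpre, ← mul_add]
    congr 1
    exact (Finset.sum_range_succ' (fun n => ν.map Φ^[n] s) N).symm.trans
      (Finset.sum_range_succ _ N)
  have hlhs := (hv _ (hΦ hs)).add (hsmall _ fun _ => hle_univ 0 s)
  have hrhs := (hv _ hs).add (hsmall _ fun N => hle_univ N s)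
  rw [map_apply hΦ hs]
  simpa using tendsto_nhds_unique (hlhs.congr htelescope) hrhs

/-- Krylov–Bogolyubov: `v` is a setwise ultrafilter limit of the Cesàro averages of `ν`. -/
theorem exists_map_eq_of_map_iterate_le [IsFiniteMeasure ν] (hΦ : Measurable Φ)
    (ρ : Measure α) [IsFiniteMeasure ρ] (hρ : ∀ n, ν.map Φ^[n] ≤ ρ) :
    ∃ v : Measure α, v.map Φ = v ∧
      ∀ s, MeasurableSet s → (∀ n, ν.map Φ^[n] s = ν s) → v s = ν s := by
  let U := Ultrafilter.of (atTop : Filter ℕ)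
  have hU : (U : Filter ℕ) ≤ atTop := Ultrafilter.of_le _
  obtain ⟨v, hv⟩ := exists_tendsto_apply_of_le U (cesaroMap Φ ν) ρ (cesaroMap_le hρ)
  refine ⟨v, map_eq_of_tendsto_cesaroMap hΦ hU hv, fun s hs hconst => ?_⟩
  have heventually : ∀ᶠ N in (U : Filter ℕ), ν s = cesaroMap Φ ν N s :=
    ((eventually_ne_atTop 0).filter_mono hU).mono fun N hN =>
      (cesaroMap_apply_of_forall_eq hN hconst).symm
  exact tendsto_nhds_unique (hv s hs) (tendsto_const_nhds.congr' heventually)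

end Measure

end MeasureTheory

open MeasureTheory.Measure in
theorem stochastically_stable_of_finite_state
    {𝒳 : Type*} [MeasurableSpace 𝒳]
    {𝒮 : Type*} [Fintype 𝒮] [Nonempty 𝒮] [MeasurableSpace 𝒮]
    (μ : Measure (ℤ → 𝒳)) [IsProbabilityMeasure μ]
    (hμ : μ.map (fun x n => x (n + 1)) = μ)
    (F : 𝒳 × 𝒮 → 𝒮) (hF : Measurable F) :
    ∃ v : Measure ((ℤ → 𝒳) × 𝒮), IsProbabilityMeasure v ∧
      v.map Prod.fst = μ ∧ v.map (skewProd F) = v := by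
  obtain ⟨s₀⟩ := ‹Nonempty 𝒮›
  have hΦ : Measurable (skewProd F) := by unfold skewProd; fun_prop
  have hshift : MeasurePreserving (fun (x : ℤ → 𝒳) n => x (n + 1)) μ μ := ⟨by fun_prop, hμ⟩
  set ν : Measure ((ℤ → 𝒳) × 𝒮) := μ.map fun x => (x, s₀)
  have hν : ν.map Prod.fst = μ := by
    rw [map_map measurable_fst measurable_prodMk_right]
    exact map_id
  have hmarginal := map_map_iterate_eq_of_semiconj measurable_fst hΦ hshift (fun _ => rfl) hν
  obtain ⟨v, hinv, hv⟩ := exists_map_eq_of_map_iterate_le hΦ _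
    (fun n => le_sum_map_prodMk_of_map_fst_eq (hmarginal n))
  have hv_fst : v.map Prod.fst = μ := by
    ext A hA
    have hconst (n : ℕ) : ν.map (skewProd F)^[n] (Prod.fst ⁻¹' A) = μ A := by
      rw [← map_apply measurable_fst hA, hmarginal n]
    have hν_fst : ν (Prod.fst ⁻¹' A) = μ A := by simpa using hconst 0
    rw [map_apply measurable_fst hA, hv _ (measurable_fst hA) fun n => (hconst n).trans
      hν_fst.symm, hν_fst]
  refine ⟨v, ⟨?_⟩, hv_fst, hinv⟩
  rw [← Set.preimage_univ (f := Prod.fst), ← map_apply measurable_fst .univ, hv_fst,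
    measure_univ]
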